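/- If Q(s|y) = Q(s) does not depend on y (i.i.d. state independent of output), then max over input distributions P(x|y') of I(X;Y|Y') under the stationary joint law equals max over P(x) of I(X;Y) for the averaged DMC Q(y|x) = ∑_{s'} Q(s')Q(y|x,s'). -/
import Mathlib


open Finset



namespace IidDmcAux

variable {X Y : Type} [Fintype X] [Fintype Y]

lemma mi_decomp (Q : X → Y → ℝ) (hQnn : ∀ x y, 0 ≤ Q x y)
    (p : X → ℝ) (hp : ∀ x, 0 ≤ p x) :
    ∑ x : X, ∑ y : Y, p x * Q x y * Real.log (Q x y / ∑ x' : X, p x' * Q x' y)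
      = (∑ x : X, ∑ y : Y, p x * Q x y * Real.log (Q x y))
        + ∑ y : Y, Real.negMulLog (∑ x' : X, p x' * Q x' y) := by
  have key : ∀ x y, p x * Q x y * Real.log (Q x y / ∑ x' : X, p x' * Q x' y)
      = p x * Q x y * Real.log (Q x y)
        - p x * Q x y * Real.log (∑ x' : X, p x' * Q x' y) := by
    intro x y
    rcases eq_or_lt_of_le (mul_nonneg (hp x) (hQnn x y)) with h | h
    · rw [← h]; ring
    · have hQpos : 0 < Q x y := by
        by_contra hc
        push_neg at hc
        have : Q x y = 0 := le_antisymm hc (hQnn x y)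
        simp [this] at h
      have hqpos : 0 < ∑ x' : X, p x' * Q x' y :=
        lt_of_lt_of_le h (Finset.single_le_sum
          (fun i _ => mul_nonneg (hp i) (hQnn i y)) (mem_univ x))
      rw [Real.log_div hQpos.ne' hqpos.ne', mul_sub]
  simp only [key, Finset.sum_sub_distrib]
  have h2 : ∑ x : X, ∑ y : Y, p x * Q x y * Real.log (∑ x' : X, p x' * Q x' y)
      = - ∑ y : Y, Real.negMulLog (∑ x' : X, p x' * Q x' y) := by
    rw [Finset.sum_comm, ← Finset.sum_neg_distrib]
    refine Finset.sum_congr rfl fun y _ => ?_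
    rw [← Finset.sum_mul, Real.negMulLog]
    ring
  rw [h2]; ring

lemma mi_bound (Q : X → Y → ℝ) (hQnn : ∀ x y, 0 ≤ Q x y)
    (hQsum : ∀ x, ∑ y : Y, Q x y = 1)
    (p : X → ℝ) (hp : ∀ x, 0 ≤ p x) :
    ∑ x : X, ∑ y : Y, p x * Q x y * Real.log (Q x y / ∑ x' : X, p x' * Q x' y)
      ≤ (Fintype.card Y : ℝ) := by
  rw [Finset.sum_comm]
  have : (Fintype.card Y : ℝ) = ∑ _y : Y, (1 : ℝ) := by simp
  rw [this]
  refine Finset.sum_le_sum fun y _ => ?_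
  set q : ℝ := ∑ x' : X, p x' * Q x' y with hq
  have hqnn : 0 ≤ q := Finset.sum_nonneg fun i _ => mul_nonneg (hp i) (hQnn i y)
  rcases eq_or_lt_of_le hqnn with h0 | hqpos
  · have hz : ∀ x, p x * Q x y = 0 := by
      intro x
      have := (Finset.sum_eq_zero_iff_of_nonneg
        (fun i (_ : i ∈ univ) => mul_nonneg (hp i) (hQnn i y))).1 h0.symm
      exact this x (mem_univ x)
    calc ∑ x : X, p x * Q x y * Real.log (Q x y / q)
        = 0 := by refine Finset.sum_eq_zero fun x _ => ?_; rw [hz x, zero_mul]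
      _ ≤ 1 := by norm_num
  · have step : ∀ x, p x * Q x y * Real.log (Q x y / q)
        ≤ p x * Q x y / q - p x * Q x y := by
      intro x
      rcases eq_or_lt_of_le (mul_nonneg (hp x) (hQnn x y)) with h | h
      · rw [← h]; simp
      · have hQpos : 0 < Q x y := by
          by_contra hc
          push_neg at hc
          have : Q x y = 0 := le_antisymm hc (hQnn x y)
          simp [this] at h
        have hdivpos : 0 < Q x y / q := div_pos hQpos hqpos
        have hlog := Real.log_le_sub_one_of_pos hdivpos
        have h1 : p x * Q x y * Real.log (Q x y / q)
            ≤ p x * Q x y * (Q x y / q - 1) :=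
          mul_le_mul_of_nonneg_left hlog h.le
        have hQle1 : Q x y ≤ 1 := by
          have := Finset.single_le_sum (fun j (_ : j ∈ univ) => hQnn x j) (mem_univ y)
          rw [hQsum x] at this; exact this
        have h2 : p x * Q x y * (Q x y / q - 1) ≤ p x * Q x y / q - p x * Q x y := by
          rw [mul_sub, mul_one]
          have : p x * Q x y * (Q x y / q) ≤ p x * Q x y / q := by
            have heq : p x * Q x y * (Q x y / q) = (p x * Q x y * Q x y) / q := by ring
            rw [heq]
            gcongr
            nlinarith [mul_nonneg (hp x) (hQnn x y)]
          linarith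
        linarith
    calc ∑ x : X, p x * Q x y * Real.log (Q x y / q)
        ≤ ∑ x : X, (p x * Q x y / q - p x * Q x y) := Finset.sum_le_sum fun x _ => step x
      _ = q / q - q := by rw [Finset.sum_sub_distrib, ← Finset.sum_div]
      _ = 1 - q := by rw [div_self hqpos.ne']
      _ ≤ 1 := by linarith

lemma mi_concave (Q : X → Y → ℝ) (hQnn : ∀ x y, 0 ≤ Q x y)
    (w : Y → ℝ) (hw : ∀ y, 0 ≤ w y) (hwsum : ∑ y : Y, w y = 1)
    (Pc : Y → X → ℝ) (hPnn : ∀ y' x, 0 ≤ Pc y' x) :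
    ∑ y' : Y, w y' * ∑ x : X, ∑ y : Y, Pc y' x * Q x y *
        Real.log (Q x y / ∑ x' : X, Pc y' x' * Q x' y)
      ≤ ∑ x : X, ∑ y : Y, (∑ y' : Y, w y' * Pc y' x) * Q x y *
          Real.log (Q x y / ∑ x' : X, (∑ y' : Y, w y' * Pc y' x') * Q x' y) := by
  have hpbar : ∀ x, 0 ≤ ∑ y' : Y, w y' * Pc y' x :=
    fun x => Finset.sum_nonneg fun y' _ => mul_nonneg (hw y') (hPnn y' x)
  rw [mi_decomp Q hQnn _ hpbar]
  have hrw : ∀ y' : Y, ∑ x : X, ∑ y : Y, Pc y' x * Q x y *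
        Real.log (Q x y / ∑ x' : X, Pc y' x' * Q x' y)
      = (∑ x : X, ∑ y : Y, Pc y' x * Q x y * Real.log (Q x y))
        + ∑ y : Y, Real.negMulLog (∑ x' : X, Pc y' x' * Q x' y) :=
    fun y' => mi_decomp Q hQnn (Pc y') (hPnn y')
  simp only [hrw, mul_add, Finset.sum_add_distrib]
  refine add_le_add ?_ ?_
  · refine le_of_eq ?_
    simp only [Finset.mul_sum, Finset.sum_mul]
    rw [Finset.sum_comm]
    refine Finset.sum_congr rfl fun x _ => ?_
    rw [Finset.sum_comm]
    exact Finset.sum_congr rfl fun y _ => Finset.sum_congr rfl fun y' _ => by ring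
  · simp only [Finset.mul_sum]
    rw [Finset.sum_comm]
    refine Finset.sum_le_sum fun y _ => ?_
    have hqeq : ∑ x' : X, (∑ y' : Y, w y' * Pc y' x') * Q x' y
        = ∑ y' : Y, w y' * ∑ x' : X, Pc y' x' * Q x' y := by
      simp only [Finset.sum_mul, Finset.mul_sum]
      rw [Finset.sum_comm]
      exact Finset.sum_congr rfl fun x _ => Finset.sum_congr rfl fun y' _ => by ring
    rw [hqeq]
    have := Real.concaveOn_negMulLog.le_map_sum (t := (univ : Finset Y)) (w := w)
      (p := fun y' => ∑ x' : X, Pc y' x' * Q x' y)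
      (fun i _ => hw i) hwsum
      (fun i _ => Finset.sum_nonneg fun j _ => mul_nonneg (hPnn i j) (hQnn j y))
    simpa [smul_eq_mul] using this

end IidDmcAux


/-- if the state is i.i.d. and independent of the output, then the maximum of
`I(X;Y|Y')` over stationary input distributions `P(x|y')` equals the DMC capacity expression
`max_{P(x)} I(X;Y)` for the averaged channel `Q(y|x) = ∑_{s'} Q(s') Q(y|x,s')`. -/
theorem iid_state_reduces_to_dmc {X Y S : Type}
    [Fintype X] [Fintype Y] [Fintype S] [Nonempty X] [Nonempty Y] [Nonempty S]
    (Qc : X → S → Y → ℝ) (Qs : S → ℝ)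
    (hQcnn : ∀ x s y, 0 ≤ Qc x s y) (hQcsum : ∀ x s, ∑ y : Y, Qc x s y = 1)
    (hQsnn : ∀ s, 0 ≤ Qs s) (hQssum : ∑ s : S, Qs s = 1)
    -- the averaged DMC `Q(y|x)`:
    (Qxy : X → Y → ℝ) (hQxy : ∀ x y, Qxy x y = ∑ s : S, Qs s * Qc x s y) :
    sSup {r : ℝ | ∃ (Pc : Y → X → ℝ) (π : Y → ℝ),
        (∀ y' x, 0 ≤ Pc y' x) ∧ (∀ y', ∑ x : X, Pc y' x = 1) ∧
        (∀ y, 0 ≤ π y) ∧ (∑ y : Y, π y = 1) ∧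
        -- `π` is a stationary distribution of the kernel `P(y|y') = ∑_x P(x|y') Q(y|x)`:
        (∀ y : Y, ∑ y' : Y, π y' * ∑ x : X, Pc y' x * Qxy x y = π y) ∧
        -- `r = I(X;Y|Y')` under the joint law `π(y') P(x|y') Q(y|x)`:
        r = ∑ y' : Y, π y' * ∑ x : X, ∑ y : Y, Pc y' x * Qxy x y *
              Real.log (Qxy x y / ∑ x' : X, Pc y' x' * Qxy x' y)} =
      sSup {r : ℝ | ∃ p : X → ℝ, (∀ x, 0 ≤ p x) ∧ (∑ x : X, p x = 1) ∧
        r = ∑ x : X, ∑ y : Y, p x * Qxy x y *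
              Real.log (Qxy x y / ∑ x' : X, p x' * Qxy x' y)} := by
  have hQnn : ∀ x y, 0 ≤ Qxy x y := fun x y => by
    rw [hQxy]; exact Finset.sum_nonneg fun s _ => mul_nonneg (hQsnn s) (hQcnn x s y)
  have hQrow : ∀ x, ∑ y : Y, Qxy x y = 1 := by
    intro x
    simp only [hQxy]
    rw [Finset.sum_comm]
    calc ∑ s : S, ∑ y : Y, Qs s * Qc x s y
        = ∑ s : S, Qs s * ∑ y : Y, Qc x s y := by
          exact Finset.sum_congr rfl fun s _ => (Finset.mul_sum _ _ _).symm
      _ = 1 := by simp only [hQcsum, mul_one]; exact hQssum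
  set A := {r : ℝ | ∃ (Pc : Y → X → ℝ) (π : Y → ℝ),
        (∀ y' x, 0 ≤ Pc y' x) ∧ (∀ y', ∑ x : X, Pc y' x = 1) ∧
        (∀ y, 0 ≤ π y) ∧ (∑ y : Y, π y = 1) ∧
        (∀ y : Y, ∑ y' : Y, π y' * ∑ x : X, Pc y' x * Qxy x y = π y) ∧
        r = ∑ y' : Y, π y' * ∑ x : X, ∑ y : Y, Pc y' x * Qxy x y *
              Real.log (Qxy x y / ∑ x' : X, Pc y' x' * Qxy x' y)} with hA
  set B := {r : ℝ | ∃ p : X → ℝ, (∀ x, 0 ≤ p x) ∧ (∑ x : X, p x = 1) ∧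
        r = ∑ x : X, ∑ y : Y, p x * Qxy x y *
              Real.log (Qxy x y / ∑ x' : X, p x' * Qxy x' y)} with hB
  -- B ⊆ A
  have hBA : B ⊆ A := by
    rintro r ⟨p, hpnn, hpsum, hr⟩
    refine ⟨fun _ => p, fun y => ∑ x : X, p x * Qxy x y, fun _ x => hpnn x,
      fun _ => hpsum, fun y => Finset.sum_nonneg fun x _ => mul_nonneg (hpnn x) (hQnn x y),
      ?_, ?_, ?_⟩
    · rw [Finset.sum_comm]
      calc ∑ x : X, ∑ y : Y, p x * Qxy x y
          = ∑ x : X, p x * ∑ y : Y, Qxy x y := by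
            exact Finset.sum_congr rfl fun x _ => (Finset.mul_sum _ _ _).symm
        _ = 1 := by simp only [hQrow, mul_one]; exact hpsum
    · intro y
      rw [← Finset.sum_mul]
      have : ∑ y' : Y, ∑ x : X, p x * Qxy x y' = 1 := by
        rw [Finset.sum_comm]
        calc ∑ x : X, ∑ y : Y, p x * Qxy x y
            = ∑ x : X, p x * ∑ y : Y, Qxy x y := by
              exact Finset.sum_congr rfl fun x _ => (Finset.mul_sum _ _ _).symm
          _ = 1 := by simp only [hQrow, mul_one]; exact hpsum
      rw [this, one_mul]
    · rw [← Finset.sum_mul]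
      have : ∑ y' : Y, ∑ x : X, p x * Qxy x y' = 1 := by
        rw [Finset.sum_comm]
        calc ∑ x : X, ∑ y : Y, p x * Qxy x y
            = ∑ x : X, p x * ∑ y : Y, Qxy x y := by
              exact Finset.sum_congr rfl fun x _ => (Finset.mul_sum _ _ _).symm
          _ = 1 := by simp only [hQrow, mul_one]; exact hpsum
      rw [this, one_mul, hr]
  -- B nonempty
  have hBne : B.Nonempty := by
    refine ⟨_, fun _ => (Fintype.card X : ℝ)⁻¹, fun _ => by positivity, ?_, rfl⟩
    rw [Finset.sum_const, Finset.card_univ, nsmul_eq_mul]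
    rw [mul_inv_cancel₀]
    exact_mod_cast Fintype.card_ne_zero
  -- B bounded above
  have hBbd : ∀ b ∈ B, b ≤ (Fintype.card Y : ℝ) := by
    rintro b ⟨p, hpnn, hpsum, hb⟩
    rw [hb]
    exact IidDmcAux.mi_bound Qxy hQnn hQrow p hpnn
  -- domination: every a ∈ A is ≤ some b ∈ B
  have hdom : ∀ a ∈ A, ∃ b ∈ B, a ≤ b := by
    rintro a ⟨Pc, π, hPnn, hPsum, hπnn, hπsum, _, ha⟩
    refine ⟨_, ⟨fun x => ∑ y' : Y, π y' * Pc y' x,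
      fun x => Finset.sum_nonneg fun y' _ => mul_nonneg (hπnn y') (hPnn y' x), ?_, rfl⟩, ?_⟩
    · rw [Finset.sum_comm]
      calc ∑ y' : Y, ∑ x : X, π y' * Pc y' x
          = ∑ y' : Y, π y' * ∑ x : X, Pc y' x := by
            exact Finset.sum_congr rfl fun y' _ => (Finset.mul_sum _ _ _).symm
        _ = 1 := by simp only [hPsum, mul_one]; exact hπsum
    · rw [ha]
      exact IidDmcAux.mi_concave Qxy hQnn π hπnn hπsum Pc hPnn
  have hAne : A.Nonempty := hBne.imp fun b hb => hBA hb
  have hBddB : BddAbove B := ⟨(Fintype.card Y : ℝ), fun b hb => hBbd b hb⟩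
  have hBddA : BddAbove A := ⟨(Fintype.card Y : ℝ), fun a ha => by
    obtain ⟨b, hb, hab⟩ := hdom a ha
    exact hab.trans (hBbd b hb)⟩
  refine le_antisymm ?_ (csSup_le_csSup hBddA hBne hBA)
  refine csSup_le hAne fun a ha => ?_
  obtain ⟨b, hb, hab⟩ := hdom a ha
  exact hab.trans (le_csSup hBddB hb)
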